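/- arXiv:1908.11360 — 2 statements merged into one kernel-verified Lean document; each statement's English description precedes it below -/
import Mathlib

section
/- (eucl_i)-Elimination: every labelled sequent Λ derivable in G3Ldm_n^m + PR is derivable in G3Ldm_n^m + PR without any use of the rules (eucl_i), i ∈ Ag. -/
namespace Stit

/-- Formulas of the language `L^m` (negation normal form), with agents `Fin m`
and propositional variables indexed by `ℕ`. -/
inductive Fml (m : ℕ) : Type
  | pos : ℕ → Fml m                  -- p
  | neg : ℕ → Fml m                  -- p̄
  | and : Fml m → Fml m → Fml m      -- φ ∧ ψ
  | or  : Fml m → Fml m → Fml m      -- φ ∨ ψ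
  | box : Fml m → Fml m              -- □φ
  | dia : Fml m → Fml m              -- ◇φ
  | ag  : Fin m → Fml m → Fml m      -- [i]φ
  | dag : Fin m → Fml m → Fml m      -- ⟨i⟩φ

namespace Fml

/-- Negation `φ̄`: replace every connective/modality by its dual and swap `p` with `p̄`. -/
def negF {m : ℕ} : Fml m → Fml m
  | pos p => neg p
  | neg p => pos p
  | and φ ψ => or φ.negF ψ.negF
  | or φ ψ => and φ.negF ψ.negF
  | box φ => dia φ.negF
  | dia φ => box φ.negF
  | ag i φ => dag i φ.negF
  | dag i φ => ag i φ.negF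

/-- `φ → ψ` abbreviates `φ̄ ∨ ψ`. -/
def impF {m : ℕ} (φ ψ : Fml m) : Fml m := or φ.negF ψ

end Fml

/-- `f 0 ∧ f 1 ∧ ⋯ ∧ f k` (left-associated). -/
def conjUpTo {m : ℕ} (f : ℕ → Fml m) : ℕ → Fml m
  | 0 => f 0
  | k+1 => Fml.and (conjUpTo f k) (f (k+1))

/-- `f 0 ∨ f 1 ∨ ⋯ ∨ f k` (left-associated). -/
def disjUpTo {m : ℕ} (f : ℕ → Fml m) : ℕ → Fml m
  | 0 => f 0
  | k+1 => Fml.or (disjUpTo f k) (f (k+1))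

/-- `(f 0)̄ ∧ ((f 1)̄ ∧ ⋯ ((f (j-1))̄ ∧ base))`. -/
def prefNegConj {m : ℕ} (f : ℕ → Fml m) : ℕ → Fml m → Fml m
  | 0, base => base
  | j+1, base => prefNegConj f j (Fml.and (f j).negF base)

/-- The antecedent `◇[i]φ_0 ∧ ◇(φ̄_0 ∧ [i]φ_1) ∧ ⋯ ∧ ◇(φ̄_0 ∧ ⋯ ∧ φ̄_{n'-1} ∧ [i]φ_{n'})`
of the (n'+1)-choice axiom. -/
def apcAnte {m : ℕ} (i : Fin m) (f : ℕ → Fml m) (n' : ℕ) : Fml m :=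
  conjUpTo (fun j => Fml.dia (prefNegConj f j (Fml.ag i (f j)))) n'

/-- The n-choice axiom `APC_n^i` for `n = n' + 1` choices `φ_0, …, φ_{n'}`. -/
def apcAx {m : ℕ} (i : Fin m) (f : ℕ → Fml m) (n' : ℕ) : Fml m :=
  (apcAnte i f n').impF (disjUpTo f n')

def diaAgIdx {m : ℕ} (f : Fin m → Fml m) (j : ℕ) : Fml m :=
  if h : j < m then Fml.dia (Fml.ag ⟨j, h⟩ (f ⟨j, h⟩)) else Fml.pos 0

def agIdx {m : ℕ} (f : Fin m → Fml m) (j : ℕ) : Fml m :=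
  if h : j < m then Fml.ag ⟨j, h⟩ (f ⟨j, h⟩) else Fml.pos 0

/-- The independence-of-agents axiom `⋀_{i∈Ag} ◇[i]φ_i → ◇(⋀_{i∈Ag} [i]φ_i)`
(for `m ≥ 1` agents). -/
def ioaAx {m : ℕ} (f : Fin m → Fml m) : Fml m :=
  (conjUpTo (diaAgIdx f) (m-1)).impF (Fml.dia (conjUpTo (agIdx f) (m-1)))

/-- An `Ldm_n^m`-model on the carrier `W`: each `rel i` is an equivalence relation (C1),
independence of agents (C2), the `n`-choice condition when `n > 0` (C3), plus a valuation. -/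
structure ModelOn (n m : ℕ) (W : Type) : Type where
  nonemp : Nonempty W
  rel : Fin m → W → W → Prop
  refl : ∀ i w, rel i w w
  symm : ∀ i w u, rel i w u → rel i u w
  trans : ∀ i w u v, rel i w u → rel i u v → rel i w v
  ioa : ∀ u : Fin m → W, ∃ v, ∀ i, rel i (u i) v
  apc : 0 < n → ∀ (i : Fin m) (w : Fin (n+1) → W),
      ∃ k j : Fin (n+1), k < j ∧ rel i (w k) (w j)
  val : ℕ → Set W

/-- Satisfaction `M, w ⊩ φ`. -/
def Sat {n m : ℕ} {W : Type} (M : ModelOn n m W) : W → Fml m → Prop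
  | w, .pos p => w ∈ M.val p
  | w, .neg p => w ∉ M.val p
  | w, .and φ ψ => Sat M w φ ∧ Sat M w ψ
  | w, .or φ ψ => Sat M w φ ∨ Sat M w ψ
  | _, .box φ => ∀ u, Sat M u φ
  | _, .dia φ => ∃ u, Sat M u φ
  | w, .ag i φ => ∀ u, M.rel i w u → Sat M u φ
  | w, .dag i φ => ∃ u, M.rel i w u ∧ Sat M u φ

/-- Validity: `⊩ φ`. -/
def Valid (n m : ℕ) (φ : Fml m) : Prop :=
  ∀ (W : Type) (M : ModelOn n m W) (w : W), Sat M w φ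

/-- Semantic consequence `Γ ⊩ φ`. -/
def SemConseq (n m : ℕ) (Γ : Set (Fml m)) (φ : Fml m) : Prop :=
  ∀ (W : Type) (M : ModelOn n m W) (w : W), (∀ ψ ∈ Γ, Sat M w ψ) → Sat M w φ

/-- The Hilbert calculus `Ldm_n^m`: classical propositional logic, S5 for `□` and each
`[i]`, the bridge axiom, IOA, the n-choice axioms (for `n > 0`), with modus ponens and
necessitation (applied to theorems). `Hderiv n m Γ φ` is `Γ ⊢_{Ldm_n^m} φ`. -/
inductive Hderiv (n m : ℕ) : Set (Fml m) → Fml m → Prop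
  | prem {Γ} {φ} (h : φ ∈ Γ) : Hderiv n m Γ φ
  | ax1 {Γ} (φ ψ : Fml m) : Hderiv n m Γ (φ.impF (ψ.impF φ))
  | ax2 {Γ} (φ ψ χ : Fml m) :
      Hderiv n m Γ ((φ.impF (ψ.impF χ)).impF ((φ.impF ψ).impF (φ.impF χ)))
  | ax3 {Γ} (φ ψ : Fml m) :
      Hderiv n m Γ ((ψ.negF.impF φ.negF).impF (φ.impF ψ))
  | boxK {Γ} (φ ψ : Fml m) :
      Hderiv n m Γ ((Fml.box (φ.impF ψ)).impF ((Fml.box φ).impF (Fml.box ψ)))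
  | boxT {Γ} (φ : Fml m) : Hderiv n m Γ ((Fml.box φ).impF φ)
  | box5 {Γ} (φ : Fml m) : Hderiv n m Γ ((Fml.dia φ).impF (Fml.box (Fml.dia φ)))
  | boxDual {Γ} (φ : Fml m) : Hderiv n m Γ (Fml.or (Fml.box φ) (Fml.dia φ.negF))
  | agK {Γ} (i : Fin m) (φ ψ : Fml m) :
      Hderiv n m Γ ((Fml.ag i (φ.impF ψ)).impF ((Fml.ag i φ).impF (Fml.ag i ψ)))
  | agT {Γ} (i : Fin m) (φ : Fml m) : Hderiv n m Γ ((Fml.ag i φ).impF φ)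
  | ag5 {Γ} (i : Fin m) (φ : Fml m) :
      Hderiv n m Γ ((Fml.dag i φ).impF (Fml.ag i (Fml.dag i φ)))
  | agDual {Γ} (i : Fin m) (φ : Fml m) :
      Hderiv n m Γ (Fml.or (Fml.ag i φ) (Fml.dag i φ.negF))
  | bridge {Γ} (i : Fin m) (φ : Fml m) :
      Hderiv n m Γ ((Fml.box φ).impF (Fml.ag i φ))
  | ioa {Γ} (f : Fin m → Fml m) : Hderiv n m Γ (ioaAx f)
  | apc {Γ} (hn : 0 < n) (i : Fin m) (f : ℕ → Fml m) :
      Hderiv n m Γ (apcAx i f (n-1))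
  | mp {Γ} {φ ψ} : Hderiv n m Γ (φ.impF ψ) → Hderiv n m Γ φ → Hderiv n m Γ ψ
  | nec {Γ} {φ} : Hderiv n m ∅ φ → Hderiv n m Γ (Fml.box φ)

/-- A relational atom `R_i x y`. -/
abbrev RAtom (m : ℕ) : Type := Fin m × ℕ × ℕ
/-- The relational part of a labelled sequent: a multiset of relational atoms. -/
abbrev RAtoms (m : ℕ) : Type := Multiset (RAtom m)
/-- A labelled formula `x : φ`. -/
abbrev LFml (m : ℕ) : Type := ℕ × Fml m
/-- The formula part of a labelled sequent: a multiset of labelled formulas. -/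
abbrev LFmls (m : ℕ) : Type := Multiset (LFml m)

/-- The label `v` does not occur in the labelled sequent `R, Γ` (eigenvariable condition). -/
def freshIn {m : ℕ} (v : ℕ) (R : RAtoms m) (Γ : LFmls m) : Prop :=
  (∀ a ∈ R, a.2.1 ≠ v ∧ a.2.2 ≠ v) ∧ ∀ e ∈ Γ, e.1 ≠ v

/-- `Reach R i w u`: `u` is `i`-reachable from `w`, i.e. there is a (possibly empty)
path of `R_i`-atoms of `R` (traversed in either direction) connecting `w` to `u`. -/
inductive Reach {m : ℕ} (R : RAtoms m) (i : Fin m) : ℕ → ℕ → Prop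
  | refl (w : ℕ) : Reach R i w w
  | fwd {w u v : ℕ} : Reach R i w u → ((i, u, v) : RAtom m) ∈ R → Reach R i w v
  | bwd {w u v : ℕ} : Reach R i w u → ((i, v, u) : RAtom m) ∈ R → Reach R i w v

/-- The relational atoms `R_1 u_1 v, …, R_m u_m v` used by the rule (IOA). -/
def ioaAtoms {m : ℕ} (u : Fin m → ℕ) (v : ℕ) : RAtoms m :=
  Multiset.ofList ((List.finRange m).map fun i => ((i, u i, v) : RAtom m))

/-- Which optional rules are present in a labelled calculus, and whether the
`[i]`-rule keeps its principal formula in the premise. -/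
structure Flags : Type where
  refl : Bool    -- (refl_i)
  eucl : Bool    -- (eucl_i)
  diaAg : Bool   -- (⟨i⟩)
  pr : Bool      -- (Pr_i)
  ioa : Bool     -- (IOA)
  agKeep : Bool  -- premise of ([i]) keeps w:[i]φ

/-- `SeqH fl n m h R Γ`: the labelled sequent `R, Γ` has a derivation of height at most
`h` in the labelled calculus determined by `fl` (with parameters `n`, `m`). -/
inductive SeqH (fl : Flags) (n m : ℕ) : ℕ → RAtoms m → LFmls m → Prop
  | id {h : ℕ} {R : RAtoms m} {Γ : LFmls m} (w p : ℕ) :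
      SeqH fl n m h R ((w, Fml.pos p) ::ₘ (w, Fml.neg p) ::ₘ Γ)
  | andR {h R Γ} {w : ℕ} {φ ψ : Fml m} :
      SeqH fl n m h R ((w, Fml.and φ ψ) ::ₘ (w, φ) ::ₘ Γ) →
      SeqH fl n m h R ((w, Fml.and φ ψ) ::ₘ (w, ψ) ::ₘ Γ) →
      SeqH fl n m (h+1) R ((w, Fml.and φ ψ) ::ₘ Γ)
  | orR {h R Γ} {w : ℕ} {φ ψ : Fml m} :
      SeqH fl n m h R ((w, Fml.or φ ψ) ::ₘ (w, φ) ::ₘ (w, ψ) ::ₘ Γ) →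
      SeqH fl n m (h+1) R ((w, Fml.or φ ψ) ::ₘ Γ)
  | boxR {h R Γ} {w v : ℕ} {φ : Fml m}
      (hv : freshIn v R ((w, Fml.box φ) ::ₘ Γ)) :
      SeqH fl n m h R ((w, Fml.box φ) ::ₘ (v, φ) ::ₘ Γ) →
      SeqH fl n m (h+1) R ((w, Fml.box φ) ::ₘ Γ)
  | diaR {h R Γ} {w u : ℕ} {φ : Fml m} :
      SeqH fl n m h R ((w, Fml.dia φ) ::ₘ (u, φ) ::ₘ Γ) →
      SeqH fl n m (h+1) R ((w, Fml.dia φ) ::ₘ Γ)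
  | agR {h R Γ} {w v : ℕ} {i : Fin m} {φ : Fml m} (hfl : fl.agKeep = false)
      (hv : freshIn v R ((w, Fml.ag i φ) ::ₘ Γ)) :
      SeqH fl n m h (((i, w, v) : RAtom m) ::ₘ R) ((v, φ) ::ₘ Γ) →
      SeqH fl n m (h+1) R ((w, Fml.ag i φ) ::ₘ Γ)
  | agRKeep {h R Γ} {w v : ℕ} {i : Fin m} {φ : Fml m} (hfl : fl.agKeep = true)
      (hv : freshIn v R ((w, Fml.ag i φ) ::ₘ Γ)) :
      SeqH fl n m h (((i, w, v) : RAtom m) ::ₘ R) ((w, Fml.ag i φ) ::ₘ (v, φ) ::ₘ Γ) →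
      SeqH fl n m (h+1) R ((w, Fml.ag i φ) ::ₘ Γ)
  | dagR {h R Γ} {w u : ℕ} {i : Fin m} {φ : Fml m} (hfl : fl.diaAg = true) :
      SeqH fl n m h (((i, w, u) : RAtom m) ::ₘ R) ((w, Fml.dag i φ) ::ₘ (u, φ) ::ₘ Γ) →
      SeqH fl n m (h+1) (((i, w, u) : RAtom m) ::ₘ R) ((w, Fml.dag i φ) ::ₘ Γ)
  | reflR {h R Γ} {i : Fin m} {w : ℕ} (hfl : fl.refl = true) :
      SeqH fl n m h (((i, w, w) : RAtom m) ::ₘ R) Γ →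
      SeqH fl n m (h+1) R Γ
  | euclR {h R Γ} {i : Fin m} {w u v : ℕ} (hfl : fl.eucl = true) :
      SeqH fl n m h (((i, w, u) : RAtom m) ::ₘ ((i, w, v) : RAtom m) ::ₘ
        ((i, u, v) : RAtom m) ::ₘ R) Γ →
      SeqH fl n m (h+1) (((i, w, u) : RAtom m) ::ₘ ((i, w, v) : RAtom m) ::ₘ R) Γ
  | ioaR {h R Γ} (hfl : fl.ioa = true) (u : Fin m → ℕ) (v : ℕ) (hv : freshIn v R Γ) :
      SeqH fl n m h (ioaAtoms u v + R) Γ →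
      SeqH fl n m (h+1) R Γ
  | apcR {h R Γ} (hn : 0 < n) (i : Fin m) (w : Fin (n+1) → ℕ) :
      (∀ k j : Fin (n+1), k < j → SeqH fl n m h (((i, w k, w j) : RAtom m) ::ₘ R) Γ) →
      SeqH fl n m (h+1) R Γ
  | prR {h R Γ} {w u : ℕ} {i : Fin m} {φ : Fml m} (hfl : fl.pr = true)
      (hreach : Reach R i w u) :
      SeqH fl n m h R ((w, Fml.dag i φ) ::ₘ (u, φ) ::ₘ Γ) →
      SeqH fl n m (h+1) R ((w, Fml.dag i φ) ::ₘ Γ)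

/-- Derivability (of some height) in the labelled calculus determined by `fl`. -/
def Seq (fl : Flags) (n m : ℕ) (R : RAtoms m) (Γ : LFmls m) : Prop :=
  ∃ h, SeqH fl n m h R Γ

/-- The calculus `G3Ldm_n^m`. -/
def G3flags : Flags := ⟨true, true, true, false, true, false⟩
/-- The calculus `G3Ldm_n^m + PR`. -/
def G3PRflags : Flags := ⟨true, true, true, true, true, false⟩
/-- `G3Ldm_n^m + PR` without the rules `(refl_i)`. -/
def G3PRnoReflFlags : Flags := ⟨false, true, true, true, true, false⟩
/-- `G3Ldm_n^m + PR` without the rules `(eucl_i)`. -/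
def G3PRnoEuclFlags : Flags := ⟨true, false, true, true, true, false⟩
/-- The refined calculus `Ldm_n^m L`. -/
def LdmLflags : Flags := ⟨false, false, false, true, true, true⟩
/-- The refined single-agent calculus `Ldm_n^1 L` (no (IOA)). -/
def LdmL1flags : Flags := ⟨false, false, false, true, false, true⟩

/-- Substitution of the label `y` for the label `x`. -/
def substLab (x y v : ℕ) : ℕ := if v = x then y else v

def substR {m : ℕ} (x y : ℕ) (R : RAtoms m) : RAtoms m :=
  R.map fun a => (a.1, substLab x y a.2.1, substLab x y a.2.2)

def substF {m : ℕ} (x y : ℕ) (Γ : LFmls m) : LFmls m :=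
  Γ.map fun e => (substLab x y e.1, e.2)

/-- Height-preserving invertibility of every inference rule of the calculus given by `fl`. -/
def InvertAll (fl : Flags) (n m : ℕ) : Prop :=
  (∀ h R Γ (w : ℕ) (φ ψ : Fml m), SeqH fl n m h R ((w, Fml.and φ ψ) ::ₘ Γ) →
     SeqH fl n m h R ((w, Fml.and φ ψ) ::ₘ (w, φ) ::ₘ Γ) ∧
     SeqH fl n m h R ((w, Fml.and φ ψ) ::ₘ (w, ψ) ::ₘ Γ)) ∧
  (∀ h R Γ (w : ℕ) (φ ψ : Fml m), SeqH fl n m h R ((w, Fml.or φ ψ) ::ₘ Γ) →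
     SeqH fl n m h R ((w, Fml.or φ ψ) ::ₘ (w, φ) ::ₘ (w, ψ) ::ₘ Γ)) ∧
  (∀ h R Γ (w v : ℕ) (φ : Fml m), freshIn v R ((w, Fml.box φ) ::ₘ Γ) →
     SeqH fl n m h R ((w, Fml.box φ) ::ₘ Γ) →
     SeqH fl n m h R ((w, Fml.box φ) ::ₘ (v, φ) ::ₘ Γ)) ∧
  (∀ h R Γ (w u : ℕ) (φ : Fml m), SeqH fl n m h R ((w, Fml.dia φ) ::ₘ Γ) →
     SeqH fl n m h R ((w, Fml.dia φ) ::ₘ (u, φ) ::ₘ Γ)) ∧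
  (fl.agKeep = false → ∀ h R Γ (w v : ℕ) (i : Fin m) (φ : Fml m),
     freshIn v R ((w, Fml.ag i φ) ::ₘ Γ) →
     SeqH fl n m h R ((w, Fml.ag i φ) ::ₘ Γ) →
     SeqH fl n m h (((i, w, v) : RAtom m) ::ₘ R) ((v, φ) ::ₘ Γ)) ∧
  (fl.agKeep = true → ∀ h R Γ (w v : ℕ) (i : Fin m) (φ : Fml m),
     freshIn v R ((w, Fml.ag i φ) ::ₘ Γ) →
     SeqH fl n m h R ((w, Fml.ag i φ) ::ₘ Γ) →
     SeqH fl n m h (((i, w, v) : RAtom m) ::ₘ R) ((w, Fml.ag i φ) ::ₘ (v, φ) ::ₘ Γ)) ∧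
  (fl.diaAg = true → ∀ h R Γ (w u : ℕ) (i : Fin m) (φ : Fml m),
     SeqH fl n m h (((i, w, u) : RAtom m) ::ₘ R) ((w, Fml.dag i φ) ::ₘ Γ) →
     SeqH fl n m h (((i, w, u) : RAtom m) ::ₘ R) ((w, Fml.dag i φ) ::ₘ (u, φ) ::ₘ Γ)) ∧
  (fl.refl = true → ∀ h R Γ (i : Fin m) (w : ℕ), SeqH fl n m h R Γ →
     SeqH fl n m h (((i, w, w) : RAtom m) ::ₘ R) Γ) ∧
  (fl.eucl = true → ∀ h R Γ (i : Fin m) (w u v : ℕ),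
     SeqH fl n m h (((i, w, u) : RAtom m) ::ₘ ((i, w, v) : RAtom m) ::ₘ R) Γ →
     SeqH fl n m h (((i, w, u) : RAtom m) ::ₘ ((i, w, v) : RAtom m) ::ₘ
       ((i, u, v) : RAtom m) ::ₘ R) Γ) ∧
  (fl.ioa = true → ∀ h R Γ (u : Fin m → ℕ) (v : ℕ), freshIn v R Γ →
     SeqH fl n m h R Γ → SeqH fl n m h (ioaAtoms u v + R) Γ) ∧
  (0 < n → ∀ h R Γ (i : Fin m) (w : Fin (n+1) → ℕ) (k j : Fin (n+1)), k < j →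
     SeqH fl n m h R Γ → SeqH fl n m h (((i, w k, w j) : RAtom m) ::ₘ R) Γ) ∧
  (fl.pr = true → ∀ h R Γ (w u : ℕ) (i : Fin m) (φ : Fml m), Reach R i w u →
     SeqH fl n m h R ((w, Fml.dag i φ) ::ₘ Γ) →
     SeqH fl n m h R ((w, Fml.dag i φ) ::ₘ (u, φ) ::ₘ Γ))

/-- A labelled sequent `R, Γ` is satisfied in `M` under the interpretation `I`. -/
def SeqSat {n m : ℕ} {W : Type} (M : ModelOn n m W) (I : ℕ → W)
    (R : RAtoms m) (Γ : LFmls m) : Prop :=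
  (∀ a ∈ R, M.rel a.1 (I a.2.1) (I a.2.2)) → ∃ e ∈ Γ, Sat M (I e.1) e.2

/-- A labelled sequent is valid: satisfied in every model under every interpretation. -/
def SeqValid (n m : ℕ) (R : RAtoms m) (Γ : LFmls m) : Prop :=
  ∀ (W : Type) (M : ModelOn n m W) (I : ℕ → W), SeqSat M I R Γ

/-! An `(eucl_i)` step adds `R_i u v` to a sequent that already contains `R_i w u` and `R_i w v`,
so `v` is already `i`-reachable from `u`. Relational atoms are only read by `(⟨i⟩)`, which
needs the atom itself, and by `(Pr_i)`, which only needs reachability; hence an atom whose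
endpoints are connected by the remaining atoms can be erased, preserving height, from any
derivation without `(eucl_i)`, turning `(⟨i⟩)` steps on it into `(Pr_i)` steps. Erasing `R_i u v`
from the premise of each `(eucl_i)` step, from the leaves down, removes all of them. -/

namespace Reach

variable {m : ℕ} {R : RAtoms m} {i : Fin m}

theorem mono {R' : RAtoms m} (hsub : R ⊆ R') {w u : ℕ} (h : Reach R i w u) :
    Reach R' i w u := by
  induction h with
  | refl => exact .refl _
  | fwd _ hx ih => exact ih.fwd (hsub hx)
  | bwd _ hx ih => exact ih.bwd (hsub hx)

theorem trans {w u v : ℕ} (h₁ : Reach R i w u) (h₂ : Reach R i u v) : Reach R i w v := by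
  induction h₂ with
  | refl => exact h₁
  | fwd _ hx ih => exact ih.fwd hx
  | bwd _ hx ih => exact ih.bwd hx

theorem symm {w u : ℕ} (h : Reach R i w u) : Reach R i u w := by
  induction h with
  | refl => exact .refl _
  | fwd _ hx ih => exact ((Reach.refl _).bwd hx).trans ih
  | bwd _ hx ih => exact ((Reach.refl _).fwd hx).trans ih

theorem of_cons {j : Fin m} {a b w u : ℕ} (hab : Reach R j a b)
    (h : Reach (((j, a, b) : RAtom m) ::ₘ R) i w u) : Reach R i w u := by
  induction h with
  | refl => exact .refl _
  | fwd _ hx ih =>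
    rcases Multiset.mem_cons.1 hx with hx | hx
    · simp only [Prod.mk.injEq] at hx
      obtain ⟨rfl, rfl, rfl⟩ := hx
      exact ih.trans hab
    · exact ih.fwd hx
  | bwd _ hx ih =>
    rcases Multiset.mem_cons.1 hx with hx | hx
    · simp only [Prod.mk.injEq] at hx
      obtain ⟨rfl, rfl, rfl⟩ := hx
      exact ih.trans hab.symm
    · exact ih.bwd hx

end Reach

theorem freshIn.mono {m v : ℕ} {R R' : RAtoms m} {Γ : LFmls m} (hsub : R' ⊆ R)
    (h : freshIn v R Γ) : freshIn v R' Γ :=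
  ⟨fun a ha => h.1 a (hsub ha), h.2⟩

namespace SeqH

variable {fl : Flags} {n m : ℕ}

theorem height_succ {h : ℕ} {R : RAtoms m} {Γ : LFmls m} (hd : SeqH fl n m h R Γ) :
    SeqH fl n m (h + 1) R Γ := by
  induction hd with
  | id w p => exact .id w p
  | andR _ _ ih₁ ih₂ => exact .andR ih₁ ih₂
  | orR _ ih => exact .orR ih
  | boxR hv _ ih => exact .boxR hv ih
  | diaR _ ih => exact .diaR ih
  | agR hfl hv _ ih => exact .agR hfl hv ih
  | agRKeep hfl hv _ ih => exact .agRKeep hfl hv ih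
  | dagR hfl _ ih => exact .dagR hfl ih
  | reflR hfl _ ih => exact .reflR hfl ih
  | euclR hfl _ ih => exact .euclR hfl ih
  | ioaR hfl u v hv _ ih => exact .ioaR hfl u v hv ih
  | apcR hn i w _ ih => exact .apcR hn i w ih
  | prR hfl hreach _ ih => exact .prR hfl hreach ih

open Multiset in
theorem of_cons_of_reach (hpr : fl.pr = true) (heucl : fl.eucl = false) {h : ℕ}
    {R : RAtoms m} {Γ : LFmls m} {j : Fin m} {a b : ℕ}
    (hd : SeqH fl n m h (((j, a, b) : RAtom m) ::ₘ R) Γ) (hab : Reach R j a b) :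
    SeqH fl n m h R Γ := by
  generalize hR : ((j, a, b) : RAtom m) ::ₘ R = R' at hd
  induction hd generalizing R with
  | id w p => exact .id w p
  | andR _ _ ih₁ ih₂ => exact .andR (ih₁ hab hR) (ih₂ hab hR)
  | orR _ ih => exact .orR (ih hab hR)
  | boxR hv _ ih => subst hR; exact .boxR (hv.mono (subset_cons _ _)) (ih hab rfl)
  | diaR _ ih => exact .diaR (ih hab hR)
  | agR hfl hv _ ih =>
    subst hR
    exact .agR hfl (hv.mono (subset_cons _ _))
      (ih (hab.mono (subset_cons _ _)) (cons_swap _ _ _))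
  | agRKeep hfl hv _ ih =>
    subst hR
    exact .agRKeep hfl (hv.mono (subset_cons _ _))
      (ih (hab.mono (subset_cons _ _)) (cons_swap _ _ _))
  | dagR hfl _ ih =>
    rcases cons_eq_cons.1 hR with ⟨hx, rfl⟩ | ⟨_, R₀, rfl, rfl⟩
    · simp only [Prod.mk.injEq] at hx
      obtain ⟨rfl, rfl, rfl⟩ := hx
      exact .prR hpr hab (ih hab rfl)
    · exact .dagR hfl (ih hab (cons_swap _ _ _))
  | reflR hfl _ ih =>
    subst hR
    exact .reflR hfl (ih (hab.mono (subset_cons _ _)) (cons_swap _ _ _))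
  | euclR hfl => simp [heucl] at hfl
  | ioaR hfl u v hv _ ih =>
    subst hR
    refine .ioaR hfl u v (hv.mono (subset_cons _ _))
      (ih (hab.mono (subset_of_le (le_add_left _ _))) (add_cons _ _ _).symm)
  | apcR hn i w _ ih =>
    subst hR
    exact .apcR hn i w fun k l hkl =>
      ih k l hkl (hab.mono (subset_cons _ _)) (cons_swap _ _ _)
  | prR hfl hreach _ ih =>
    subst hR
    exact .prR hfl (hab.of_cons hreach) (ih hab rfl)

theorem erase_eucl (hpr : fl.pr = true) {h : ℕ} {R : RAtoms m} {Γ : LFmls m}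
    (hd : SeqH fl n m h R Γ) : SeqH { fl with eucl := false } n m h R Γ := by
  induction hd with
  | id w p => exact .id w p
  | andR _ _ ih₁ ih₂ => exact .andR ih₁ ih₂
  | orR _ ih => exact .orR ih
  | boxR hv _ ih => exact .boxR hv ih
  | diaR _ ih => exact .diaR ih
  | agR hfl hv _ ih => exact .agR hfl hv ih
  | agRKeep hfl hv _ ih => exact .agRKeep hfl hv ih
  | dagR hfl _ ih => exact .dagR hfl ih
  | reflR hfl _ ih => exact .reflR hfl ih
  | @euclR h R Γ i w u v _ _ ih =>
    have huv : Reach (((i, w, u) : RAtom m) ::ₘ ((i, w, v) : RAtom m) ::ₘ R) i u v :=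
      ((Reach.refl u).bwd (Multiset.mem_cons_self _ _)).fwd
        (Multiset.mem_cons_of_mem (Multiset.mem_cons_self _ _))
    refine (of_cons_of_reach (fl := { fl with eucl := false }) hpr rfl ?_ huv).height_succ
    rwa [Multiset.cons_swap ((i, u, v) : RAtom m), Multiset.cons_swap ((i, u, v) : RAtom m)]
  | ioaR hfl u v hv _ ih => exact .ioaR hfl u v hv ih
  | apcR hn i w _ ih => exact .apcR hn i w ih
  | prR hfl hreach _ ih => exact .prR hfl hreach ih

end SeqH

theorem eucl_elimination_general (n m : ℕ)
    (R : RAtoms m) (Γ : LFmls m)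
    (hd : Seq G3PRflags n m R Γ) :
    Seq G3PRnoEuclFlags n m R Γ := by
  obtain ⟨h, hd⟩ := hd
  exact ⟨h, hd.erase_eucl rfl⟩

/-- `(eucl_i)`-elimination: every sequent derivable in `G3Ldm_n^m + PR`
is derivable in `G3Ldm_n^m + PR` without any use of the rules `(eucl_i)`. -/
theorem eucl_elimination (n m : ℕ) (hm : 1 ≤ m)
    (R : RAtoms m) (Γ : LFmls m)
    (hd : Seq G3PRflags n m R Γ) :
    Seq G3PRnoEuclFlags n m R Γ :=
  eucl_elimination_general n m R Γ hd

end Stit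
end

section
/- Decidability of single-agent STIT logics: for each n ∈ ℕ, the set of formulas φ ∈ L^1 that are valid on all Ldm_n^1-models is decidable, i.e., there is a computable function that, given a formula φ ∈ L^1, decides whether ⊩ φ. -/
/-!
Fix a formula `φ` of `L^1` whose variables lie below `k`. Abstract a world of an `Ldm_n^1`-model to
its valuation type (the set of variables below `k` true there, a number `t < 2 ^ k`), a choice
cell to the set `S` of types realized in it, and the model to the set `μ` of cell types it
realizes. This is a bounded morphism onto the finite structure with worlds `(S, t)`, so it
preserves the truth of `φ`, and by the `n`-choice condition `μ` has at most `n` cells when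
`n > 0`. Conversely every such structure is itself an `Ldm_n^1`-model. Hence `φ` is valid iff it
holds throughout each of the finitely many structures `μ < 2 ^ 2 ^ 2 ^ k` with at most `n` cells,
which is checked by computing truth tables by course-of-values recursion on the code of `φ`.
-/

namespace Stit

/-- An explicit injective numerical encoding of single-agent formulas. -/
def encFml : Fml 1 → ℕ
  | .pos p => Nat.pair 0 p
  | .neg p => Nat.pair 1 p
  | .and φ ψ => Nat.pair 2 (Nat.pair (encFml φ) (encFml ψ))
  | .or φ ψ => Nat.pair 3 (Nat.pair (encFml φ) (encFml ψ))
  | .box φ => Nat.pair 4 (encFml φ)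
  | .dia φ => Nat.pair 5 (encFml φ)
  | .ag _ φ => Nat.pair 6 (encFml φ)
  | .dag _ φ => Nat.pair 7 (encFml φ)


namespace Fml

variable {m : ℕ}

def VarsLt (k : ℕ) : Fml m → Prop
  | pos p | neg p => p < k
  | and φ ψ | or φ ψ => φ.VarsLt k ∧ ψ.VarsLt k
  | box φ | dia φ | ag _ φ | dag _ φ => φ.VarsLt k

theorem VarsLt.mono {k k' : ℕ} (hk : k ≤ k') {φ : Fml m} (h : φ.VarsLt k) : φ.VarsLt k' := by
  induction φ with
  | pos | neg => exact lt_of_lt_of_le h hk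
  | and _ _ ih₁ ih₂ | or _ _ ih₁ ih₂ => exact ⟨ih₁ h.1, ih₂ h.2⟩
  | box _ ih | dia _ ih | ag _ _ ih | dag _ _ ih => exact ih h

end Fml

theorem encFml_injective : Function.Injective encFml := by
  intro φ
  induction φ <;> intro ψ h <;> cases ψ <;> simp [encFml, Nat.pair_eq_pair] at h <;> aesop

theorem varsLt_encFml (φ : Fml 1) : φ.VarsLt (encFml φ + 1) := by
  induction φ with
  | pos p | neg p => exact Nat.lt_succ_of_le (Nat.right_le_pair _ p)
  | and φ ψ ihφ ihψ | or φ ψ ihφ ihψ =>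
    refine ⟨ihφ.mono ?_, ihψ.mono ?_⟩ <;> simp only [encFml] <;> apply Nat.succ_le_succ
    · exact (Nat.left_le_pair _ _).trans (Nat.right_le_pair _ _)
    · exact (Nat.right_le_pair _ _).trans (Nat.right_le_pair _ _)
  | box φ ih | dia φ ih | ag _ φ ih | dag _ φ ih =>
    exact ih.mono (by simpa [encFml] using Nat.right_le_pair _ (encFml φ))

theorem right_lt_pair {a b : ℕ} (ha : 0 < a) : b < Nat.pair a b := by
  unfold Nat.pair
  split <;> nlinarith

theorem testBit_sum_two_pow (s : Finset ℕ) (i : ℕ) :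
    (∑ j ∈ s, 2 ^ j).testBit i ↔ i ∈ s := by
  rw [← Nat.mem_bitIndices, ← List.mem_toFinset, Finset.toFinset_bitIndices_sum_two_pow]

theorem lt_of_testBit_of_lt_two_pow {x i B : ℕ} (hx : x < 2 ^ B) (h : x.testBit i) : i < B := by
  by_contra hi
  have := Nat.testBit_lt_two_pow (hx.trans_le (Nat.pow_le_pow_right two_pos (not_lt.1 hi)))
  simp_all

theorem forall_lt_testBit_iff {x B : ℕ} (hx : x < 2 ^ B) {P : ℕ → Prop} :
    (∀ i < B, x.testBit i → P i) ↔ ∀ i, x.testBit i → P i :=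
  ⟨fun h i hi => h i (lt_of_testBit_of_lt_two_pow hx hi) hi, fun h i _ => h i⟩

theorem exists_lt_testBit_iff {x B : ℕ} (hx : x < 2 ^ B) {P : ℕ → Prop} :
    (∃ i < B, x.testBit i ∧ P i) ↔ ∃ i, x.testBit i ∧ P i :=
  ⟨fun ⟨i, _, hi⟩ => ⟨i, hi⟩,
    fun ⟨i, hi, h⟩ => ⟨i, lt_of_testBit_of_lt_two_pow hx hi, hi, h⟩⟩

/-- Satisfaction in the finite structure coded by `μ`: its worlds are the pairs `(S, t)` with
`μ.testBit S` and `S.testBit t`, the agent's choice cells are the sets of worlds with a common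
`S`, and the variable `p` holds at `(S, t)` iff `t.testBit p`. -/
def TypeSat (μ : ℕ) : ℕ → ℕ → Fml 1 → Prop
  | _, t, .pos p => t.testBit p
  | _, t, .neg p => ¬ t.testBit p
  | S, t, .and φ ψ => TypeSat μ S t φ ∧ TypeSat μ S t ψ
  | S, t, .or φ ψ => TypeSat μ S t φ ∨ TypeSat μ S t ψ
  | _, _, .box φ => ∀ S, μ.testBit S → ∀ t, S.testBit t → TypeSat μ S t φ
  | _, _, .dia φ => ∃ S, μ.testBit S ∧ ∃ t, S.testBit t ∧ TypeSat μ S t φ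
  | S, _, .ag _ φ => ∀ t, S.testBit t → TypeSat μ S t φ
  | S, _, .dag _ φ => ∃ t, S.testBit t ∧ TypeSat μ S t φ

/-- A map onto the structure of `TypeSat μ` that is a bounded morphism for both the universal and
the choice relation and respects the variables below `k`. -/
structure TypeMorphism {n : ℕ} {W : Type} (M : ModelOn n 1 W) (k μ : ℕ) where
  cell : W → ℕ
  vtype : W → ℕ
  mem_val_iff : ∀ u p, p < k → (u ∈ M.val p ↔ (vtype u).testBit p)
  testBit_cell : ∀ u, μ.testBit (cell u)
  testBit_vtype : ∀ u, (cell u).testBit (vtype u)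
  cell_eq_of_rel : ∀ u v, M.rel 0 u v → cell v = cell u
  exists_rel : ∀ u t, (cell u).testBit t → ∃ v, M.rel 0 u v ∧ vtype v = t
  exists_world : ∀ S t, μ.testBit S → S.testBit t → ∃ u, cell u = S ∧ vtype u = t

namespace TypeMorphism

variable {n k μ : ℕ} {W : Type} {M : ModelOn n 1 W} (f : TypeMorphism M k μ)

theorem testBit_vtype_of_rel {u v : W} (h : M.rel 0 u v) : (f.cell u).testBit (f.vtype v) :=
  f.cell_eq_of_rel u v h ▸ f.testBit_vtype v

theorem sat_iff {φ : Fml 1} (hφ : φ.VarsLt k) (u : W) :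
    Sat M u φ ↔ TypeSat μ (f.cell u) (f.vtype u) φ := by
  induction φ generalizing u with
  | pos p => exact f.mem_val_iff u p hφ
  | neg p => exact (f.mem_val_iff u p hφ).not
  | and φ ψ ihφ ihψ => exact and_congr (ihφ hφ.1 u) (ihψ hφ.2 u)
  | or φ ψ ihφ ihψ => exact or_congr (ihφ hφ.1 u) (ihψ hφ.2 u)
  | box φ ih =>
    refine ⟨fun h S hS t ht => ?_,
      fun h v => (ih hφ v).2 (h _ (f.testBit_cell v) _ (f.testBit_vtype v))⟩
    obtain ⟨v, rfl, rfl⟩ := f.exists_world S t hS ht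
    exact (ih hφ v).1 (h v)
  | dia φ ih =>
    refine ⟨fun ⟨v, hv⟩ => ⟨_, f.testBit_cell v, _, f.testBit_vtype v, (ih hφ v).1 hv⟩,
      ?_⟩
    rintro ⟨S, hS, t, ht, h⟩
    obtain ⟨v, rfl, rfl⟩ := f.exists_world S t hS ht
    exact ⟨v, (ih hφ v).2 h⟩
  | ag i φ ih =>
    obtain rfl := Subsingleton.elim i 0
    refine ⟨fun h t ht => ?_, fun h v hv => ?_⟩
    · obtain ⟨v, hv, rfl⟩ := f.exists_rel u t ht
      exact f.cell_eq_of_rel u v hv ▸ (ih hφ v).1 (h v hv)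
    · exact (ih hφ v).2 (f.cell_eq_of_rel u v hv ▸ h _ (f.testBit_vtype_of_rel hv))
  | dag i φ ih =>
    obtain rfl := Subsingleton.elim i 0
    refine ⟨fun ⟨v, hv, h⟩ => ⟨_, f.testBit_vtype_of_rel hv, ?_⟩,
      fun ⟨t, ht, h⟩ => ?_⟩
    · exact f.cell_eq_of_rel u v hv ▸ (ih hφ v).1 h
    · obtain ⟨v, hv, rfl⟩ := f.exists_rel u t ht
      exact ⟨v, hv, (ih hφ v).2 (f.cell_eq_of_rel u v hv ▸ h)⟩

end TypeMorphism

def cellsBelow (B μ : ℕ) : Finset ℕ := (Finset.range B).filter fun S => μ.testBit S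

def TypeWorld (μ : ℕ) : Type := {x : ℕ × ℕ // μ.testBit x.1 ∧ x.1.testBit x.2}

/-- The structure of `TypeSat μ` as a model; with at most `n` cells it satisfies the `n`-choice
condition by pigeonhole. -/
def typeModel (n : ℕ) {B μ : ℕ} (hμ : μ < 2 ^ B)
    (hcells : 0 < n → (cellsBelow B μ).card ≤ n) (hne : Nonempty (TypeWorld μ)) :
    ModelOn n 1 (TypeWorld μ) where
  nonemp := hne
  rel _ x y := x.1.1 = y.1.1
  refl _ _ := rfl
  symm _ _ _ := Eq.symm
  trans _ _ _ _ := Eq.trans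
  ioa u := ⟨u 0, fun i => by rw [Subsingleton.elim i 0]⟩
  apc hn _ w := by
    have hmaps : ∀ a ∈ (Finset.univ : Finset (Fin (n + 1))), (w a).1.1 ∈ cellsBelow B μ :=
      fun a _ => Finset.mem_filter.2
        ⟨Finset.mem_range.2 (lt_of_testBit_of_lt_two_pow hμ (w a).2.1), (w a).2.1⟩
    obtain ⟨a, -, b, -, hab, heq⟩ := Finset.exists_ne_map_eq_of_card_lt_of_maps_to
      (by simpa using Nat.lt_succ_of_le (hcells hn)) hmaps
    rcases hab.lt_or_gt with h | h
    · exact ⟨a, b, h, heq⟩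
    · exact ⟨b, a, h, heq.symm⟩
  val p := {x | x.1.2.testBit p}

def typeModel.typeMorphism (n k : ℕ) {B μ : ℕ} (hμ : μ < 2 ^ B)
    (hcells : 0 < n → (cellsBelow B μ).card ≤ n) (hne : Nonempty (TypeWorld μ)) :
    TypeMorphism (typeModel n hμ hcells hne) k μ where
  cell x := x.1.1
  vtype x := x.1.2
  mem_val_iff _ _ _ := Iff.rfl
  testBit_cell x := x.2.1
  testBit_vtype x := x.2.2
  cell_eq_of_rel _ _ h := h.symm
  exists_rel x t ht := ⟨⟨(x.1.1, t), x.2.1, ht⟩, rfl, rfl⟩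
  exists_world S t hS ht := ⟨⟨(S, t), hS, ht⟩, rfl, rfl⟩

section Abstraction

open scoped Classical

variable {n : ℕ} {W : Type} (M : ModelOn n 1 W) (k : ℕ)

noncomputable def vtypeOf (u : W) : ℕ := ∑ p ∈ (Finset.range k).filter (u ∈ M.val ·), 2 ^ p

noncomputable def cellOf (u : W) : ℕ :=
  ∑ t ∈ (Finset.range (2 ^ k)).filter (fun t => ∃ v, M.rel 0 u v ∧ vtypeOf M k v = t), 2 ^ t

noncomputable def realizedCells : Finset ℕ :=
  (Finset.range (2 ^ 2 ^ k)).filter fun S => ∃ u, cellOf M k u = S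

noncomputable def cellsCode : ℕ := ∑ S ∈ realizedCells M k, 2 ^ S

theorem vtypeOf_lt (u : W) : vtypeOf M k u < 2 ^ k :=
  Nat.geomSum_lt le_rfl fun _ hp => Finset.mem_range.1 (Finset.mem_filter.1 hp).1

theorem cellOf_lt (u : W) : cellOf M k u < 2 ^ 2 ^ k :=
  Nat.geomSum_lt le_rfl fun _ ht => Finset.mem_range.1 (Finset.mem_filter.1 ht).1

theorem cellsCode_lt : cellsCode M k < 2 ^ 2 ^ 2 ^ k :=
  Nat.geomSum_lt le_rfl fun _ hS => Finset.mem_range.1 (Finset.mem_filter.1 hS).1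

theorem testBit_cellOf {u : W} {t : ℕ} :
    (cellOf M k u).testBit t ↔ ∃ v, M.rel 0 u v ∧ vtypeOf M k v = t := by
  simp only [cellOf, testBit_sum_two_pow, Finset.mem_filter, Finset.mem_range,
    and_iff_right_iff_imp]
  rintro ⟨v, -, rfl⟩
  exact vtypeOf_lt M k v

theorem testBit_cellsCode {S : ℕ} : (cellsCode M k).testBit S ↔ ∃ u, cellOf M k u = S := by
  simp only [cellsCode, realizedCells, testBit_sum_two_pow, Finset.mem_filter, Finset.mem_range,
    and_iff_right_iff_imp]
  rintro ⟨u, rfl⟩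
  exact cellOf_lt M k u

theorem cellOf_eq_of_rel {u v : W} (h : M.rel 0 u v) : cellOf M k v = cellOf M k u := by
  unfold cellOf
  congr 1
  ext t
  simp only [Finset.mem_filter]
  exact and_congr_right fun _ => ⟨fun ⟨x, hx, hxt⟩ => ⟨x, M.trans 0 _ _ _ h hx, hxt⟩,
    fun ⟨x, hx, hxt⟩ => ⟨x, M.trans 0 _ _ _ (M.symm 0 _ _ h) hx, hxt⟩⟩

noncomputable def typeMorphismOf : TypeMorphism M k (cellsCode M k) where
  cell := cellOf M k
  vtype := vtypeOf M k
  mem_val_iff u p hp := by simp [vtypeOf, testBit_sum_two_pow, hp]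
  testBit_cell u := (testBit_cellsCode M k).2 ⟨u, rfl⟩
  testBit_vtype u := (testBit_cellOf M k).2 ⟨u, M.refl 0 u, rfl⟩
  cell_eq_of_rel _ _ := cellOf_eq_of_rel M k
  exists_rel _ _ := (testBit_cellOf M k).1
  exists_world S t hS ht := by
    obtain ⟨u, rfl⟩ := (testBit_cellsCode M k).1 hS
    obtain ⟨v, huv, rfl⟩ := (testBit_cellOf M k).1 ht
    exact ⟨v, cellOf_eq_of_rel M k huv, rfl⟩

theorem cellsBelow_cellsCode : cellsBelow (2 ^ 2 ^ k) (cellsCode M k) = realizedCells M k := by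
  ext S
  simp only [cellsBelow, realizedCells, Finset.mem_filter, testBit_cellsCode]

/-- Worlds in `n + 1` distinct cells would contradict the `n`-choice condition. -/
theorem card_realizedCells_le (hn : 0 < n) : (realizedCells M k).card ≤ n := by
  by_contra! hcard
  let e : Fin (n + 1) ↪ realizedCells M k :=
    (Fin.castLEEmb hcard).trans (realizedCells M k).equivFin.symm.toEmbedding
  have hreal (a : Fin (n + 1)) : ∃ u, cellOf M k u = e a := (Finset.mem_filter.1 (e a).2).2
  choose w hw using hreal
  obtain ⟨a, b, hab, hrel⟩ := M.apc hn 0 w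
  have : e a = e b :=
    Subtype.ext ((hw a).symm.trans ((cellOf_eq_of_rel M k hrel).symm.trans (hw b)))
  exact hab.ne (e.injective this)

end Abstraction

theorem valid_iff_forall_typeSat {n k : ℕ} {φ : Fml 1} (hφ : φ.VarsLt k) :
    Valid n 1 φ ↔ ∀ μ < 2 ^ 2 ^ 2 ^ k, (0 < n → (cellsBelow (2 ^ 2 ^ k) μ).card ≤ n) →
      ∀ S, μ.testBit S → ∀ t, S.testBit t → TypeSat μ S t φ := by
  refine ⟨fun hvalid μ hμ hcells S hS t ht => ?_, fun h W M w => ?_⟩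
  · let x : TypeWorld μ := ⟨(S, t), hS, ht⟩
    exact ((typeModel.typeMorphism n k hμ hcells ⟨x⟩).sat_iff hφ x).1 (hvalid _ _ x)
  · have hcells (hn : 0 < n) : (cellsBelow (2 ^ 2 ^ k) (cellsCode M k)).card ≤ n := by
      rw [cellsBelow_cellsCode]
      exact card_realizedCells_le M k hn
    let f := typeMorphismOf M k
    exact (f.sat_iff hφ w).2
      (h _ (cellsCode_lt M k) hcells _ (f.testBit_cell w) _ (f.testBit_vtype w))

def tableAt (T : List (List Bool)) (S t : ℕ) : Bool := (T.getD S []).getD t false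

/-- The truth value at `(S, t)` of a formula whose code is `Nat.pair tag rest` (see `encFml`),
given the truth tables `T₁`, `T₂` of its immediate subformulas. -/
def entry (k μ tag rest : ℕ) (T₁ T₂ : List (List Bool)) (S t : ℕ) : Bool :=
  [t.testBit rest, !t.testBit rest, tableAt T₁ S t && tableAt T₂ S t,
    tableAt T₁ S t || tableAt T₂ S t,
    decide (∀ S' < 2 ^ 2 ^ k, μ.testBit S' →
      ∀ t' < 2 ^ k, S'.testBit t' → tableAt T₁ S' t'),
    decide (∃ S' < 2 ^ 2 ^ k, μ.testBit S' ∧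
      ∃ t' < 2 ^ k, S'.testBit t' ∧ tableAt T₁ S' t'),
    decide (∀ t' < 2 ^ k, S.testBit t' → tableAt T₁ S t'),
    decide (∃ t' < 2 ^ k, S.testBit t' ∧ tableAt T₁ S t')].getD tag false

def node (k μ tag rest : ℕ) (T₁ T₂ : List (List Bool)) : List (List Bool) :=
  (List.range (2 ^ 2 ^ k)).map fun S => (List.range (2 ^ k)).map (entry k μ tag rest T₁ T₂ S)

-- The codes of the immediate subformulas of the formula coded by `c` (junk where it has fewer).

def child₁ (c : ℕ) : ℕ := if c.unpair.1 ≤ 3 then c.unpair.2.unpair.1 else c.unpair.2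

def child₂ (c : ℕ) : ℕ := c.unpair.2.unpair.2

/-- The truth table, indexed by `(S, t)` with `S < 2 ^ 2 ^ k` and `t < 2 ^ k`, of the formula
coded by `c` in the structure of `TypeSat μ`. -/
def table (k μ c : ℕ) : List (List Bool) :=
  node k μ c.unpair.1 c.unpair.2
    (if child₁ c < c then table k μ (child₁ c) else [])
    (if child₂ c < c then table k μ (child₂ c) else [])
termination_by c

theorem getD_map_range {β : Type*} (f : ℕ → β) (c i : ℕ) (d : β) :
    ((List.range c).map f).getD i d = if i < c then f i else d := by
  split_ifs with h <;> simp [List.getD_eq_getElem?_getD, h]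

theorem tableAt_node {k μ tag rest S t : ℕ} {T₁ T₂ : List (List Bool)} (hS : S < 2 ^ 2 ^ k)
    (ht : t < 2 ^ k) :
    tableAt (node k μ tag rest T₁ T₂) S t = entry k μ tag rest T₁ T₂ S t := by
  simp [tableAt, node, List.getD_eq_getElem?_getD, hS, ht]

theorem table_pair {k μ tag x : ℕ} (htag : 0 < tag) :
    table k μ (Nat.pair tag x) =
      node k μ tag x (table k μ (if tag ≤ 3 then x.unpair.1 else x))
        (table k μ x.unpair.2) := by
  have hx := right_lt_pair (b := x) htag
  have h₁ : child₁ (Nat.pair tag x) < Nat.pair tag x := by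
    rw [child₁, Nat.unpair_pair]
    split
    · exact (Nat.unpair_left_le x).trans_lt hx
    · exact hx
  have h₂ : child₂ (Nat.pair tag x) < Nat.pair tag x := by
    rw [child₂, Nat.unpair_pair]
    exact (Nat.unpair_right_le x).trans_lt hx
  rw [table, if_pos h₁, if_pos h₂, child₁, child₂, Nat.unpair_pair]

theorem tableAt_table_encFml {k μ : ℕ} (hμ : μ < 2 ^ 2 ^ 2 ^ k) (φ : Fml 1) {S t : ℕ}
    (hS : S < 2 ^ 2 ^ k) (ht : t < 2 ^ k) :
    tableAt (table k μ (encFml φ)) S t ↔ TypeSat μ S t φ := by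
  induction φ generalizing S t with
  | pos p | neg p =>
    rw [encFml, table, tableAt_node hS ht]
    simp [entry, TypeSat]
  | and φ ψ ihφ ihψ | or φ ψ ihφ ihψ =>
    rw [encFml, table_pair (by norm_num), if_pos (by norm_num), Nat.unpair_pair,
      tableAt_node hS ht]
    simp [entry, TypeSat, ihφ hS ht, ihψ hS ht]
  | box φ ih =>
    rw [encFml, table_pair (by norm_num), if_neg (by norm_num), tableAt_node hS ht]
    simp only [entry, List.getD_cons_succ, List.getD_cons_zero, decide_eq_true_eq, TypeSat,
      forall_lt_testBit_iff hμ]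
    refine forall₂_congr fun S' hS' => ?_
    have hS'lt := lt_of_testBit_of_lt_two_pow hμ hS'
    rw [forall_lt_testBit_iff hS'lt]
    exact forall₂_congr fun t' ht' => ih hS'lt (lt_of_testBit_of_lt_two_pow hS'lt ht')
  | dia φ ih =>
    rw [encFml, table_pair (by norm_num), if_neg (by norm_num), tableAt_node hS ht]
    simp only [entry, List.getD_cons_succ, List.getD_cons_zero, decide_eq_true_eq, TypeSat,
      exists_lt_testBit_iff hμ]
    refine exists_congr fun S' => and_congr_right fun hS' => ?_
    have hS'lt := lt_of_testBit_of_lt_two_pow hμ hS'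
    rw [exists_lt_testBit_iff hS'lt]
    exact exists_congr fun t' =>
      and_congr_right fun ht' => ih hS'lt (lt_of_testBit_of_lt_two_pow hS'lt ht')
  | ag _ φ ih =>
    rw [encFml, table_pair (by norm_num), if_neg (by norm_num), tableAt_node hS ht]
    simp only [entry, List.getD_cons_succ, List.getD_cons_zero, decide_eq_true_eq, TypeSat,
      forall_lt_testBit_iff hS]
    exact forall₂_congr fun t' ht' => ih hS (lt_of_testBit_of_lt_two_pow hS ht')
  | dag _ φ ih =>
    rw [encFml, table_pair (by norm_num), if_neg (by norm_num), tableAt_node hS ht]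
    simp only [entry, List.getD_cons_succ, List.getD_cons_zero, decide_eq_true_eq, TypeSat,
      exists_lt_testBit_iff hS]
    exact exists_congr fun t' =>
      and_congr_right fun ht' => ih hS (lt_of_testBit_of_lt_two_pow hS ht')

def HoldsEverywhere (k μ c : ℕ) : Prop :=
  ∀ S < 2 ^ 2 ^ k, μ.testBit S → ∀ t < 2 ^ k, S.testBit t → tableAt (table k μ c) S t

instance (k μ c : ℕ) : Decidable (HoldsEverywhere k μ c) := by
  unfold HoldsEverywhere
  infer_instance

/-- The variable bound `c + 1` is justified by `varsLt_encFml`. -/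
def IsValidCode (n c : ℕ) : Prop :=
  ∀ μ < 2 ^ 2 ^ 2 ^ (c + 1), (0 < n → (cellsBelow (2 ^ 2 ^ (c + 1)) μ).card ≤ n) →
    HoldsEverywhere (c + 1) μ c

instance (n : ℕ) : DecidablePred (IsValidCode n) := fun _ => by
  unfold IsValidCode
  infer_instance

theorem isValidCode_encFml_iff (n : ℕ) (φ : Fml 1) :
    IsValidCode n (encFml φ) ↔ Valid n 1 φ := by
  rw [valid_iff_forall_typeSat (varsLt_encFml φ)]
  refine forall₂_congr fun μ hμ => imp_congr_right fun _ => ?_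
  rw [HoldsEverywhere, forall_lt_testBit_iff hμ]
  refine forall₂_congr fun S hS => ?_
  have hSlt := lt_of_testBit_of_lt_two_pow hμ hS
  rw [forall_lt_testBit_iff hSlt]
  exact forall₂_congr fun t ht =>
    tableAt_table_encFml hμ φ hSlt (lt_of_testBit_of_lt_two_pow hSlt ht)

section Primrec

open Primrec

variable {α : Type*} [Primcodable α]

theorem primrec_pow : Primrec₂ ((· ^ ·) : ℕ → ℕ → ℕ) :=
  Primrec₂.unpaired'.1 Nat.Primrec.pow

theorem primrec_testBit : Primrec₂ Nat.testBit :=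
  (Primrec.eq.comp (nat_mod.comp (nat_div.comp fst (primrec_pow.comp (const 2) snd)) (const 2))
    (const 1)).decide.of_eq fun _ => Nat.testBit_eq_decide_div_mod_eq.symm

theorem primrecPred_eq_true {b : α → Bool} (hb : Primrec b) : PrimrecPred fun a => b a = true :=
  Primrec.primrecPred (hb.of_eq fun a => by simp)

theorem _root_.PrimrecPred.imp {p q : α → Prop} (hp : PrimrecPred p) (hq : PrimrecPred q) :
    PrimrecPred fun a => p a → q a :=
  (hp.not.or hq).of_eq fun a => by tauto

theorem primrecPred_forall_lt {p : α × ℕ → Prop} {b : α → ℕ} (hb : Primrec b)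
    (hp : PrimrecPred p) : PrimrecPred fun a => ∀ i < b a, p (a, i) :=
  (PrimrecRel.forall_mem_list (R := fun i a => p (a, i)) (hp.comp (snd.pair fst))).comp
    (list_range.comp hb) Primrec.id |>.of_eq fun a => by simp

theorem primrecPred_exists_lt {p : α × ℕ → Prop} {b : α → ℕ} (hb : Primrec b)
    (hp : PrimrecPred p) : PrimrecPred fun a => ∃ i < b a, p (a, i) :=
  (PrimrecRel.exists_mem_list (R := fun i a => p (a, i)) (hp.comp (snd.pair fst))).comp
    (list_range.comp hb) Primrec.id |>.of_eq fun a => by simp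

theorem primrec_tableAt {T : α → List (List Bool)} {S t : α → ℕ} (hT : Primrec T)
    (hS : Primrec S) (ht : Primrec t) : Primrec fun a => tableAt (T a) (S a) (t a) :=
  (list_getD false).comp ((list_getD []).comp hT hS) ht

theorem primrec_entry {k μ tag rest S t : α → ℕ} {T₁ T₂ : α → List (List Bool)}
    (hk : Primrec k) (hμ : Primrec μ) (htag : Primrec tag) (hrest : Primrec rest)
    (hT₁ : Primrec T₁) (hT₂ : Primrec T₂) (hS : Primrec S) (ht : Primrec t) :
    Primrec fun a => entry (k a) (μ a) (tag a) (rest a) (T₁ a) (T₂ a) (S a) (t a) := by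
  have hP : Primrec fun a => 2 ^ k a := primrec_pow.comp (const 2) hk
  have hB : Primrec fun a => 2 ^ 2 ^ k a := primrec_pow.comp (const 2) hP
  have lit := primrec_testBit.comp ht hrest
  have at₁ := primrec_tableAt hT₁ hS ht
  have at₂ := primrec_tableAt hT₂ hS ht
  have inModel := primrecPred_eq_true (α := α × ℕ) (primrec_testBit.comp (hμ.comp fst) snd)
  have inCell := primrecPred_eq_true (α := (α × ℕ) × ℕ)
    (primrec_testBit.comp (snd.comp fst) snd)
  have holds := primrecPred_eq_true (α := (α × ℕ) × ℕ)
    (primrec_tableAt (hT₁.comp (fst.comp fst)) (snd.comp fst) snd)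
  have box := primrecPred_forall_lt hB
    (inModel.imp (primrecPred_forall_lt (hP.comp fst) (inCell.imp holds)))
  have dia := primrecPred_exists_lt hB
    (inModel.and (primrecPred_exists_lt (hP.comp fst) (inCell.and holds)))
  have inCell' := primrecPred_eq_true (α := α × ℕ) (primrec_testBit.comp (hS.comp fst) snd)
  have holds' := primrecPred_eq_true (α := α × ℕ)
    (primrec_tableAt (hT₁.comp fst) (hS.comp fst) snd)
  have ag := primrecPred_forall_lt hP (inCell'.imp holds')
  have dag := primrecPred_exists_lt hP (inCell'.and holds')
  exact ((list_getD false).comp (list_cons.comp lit (list_cons.comp (Primrec.not.comp lit)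
    (list_cons.comp (Primrec.and.comp at₁ at₂) (list_cons.comp (Primrec.or.comp at₁ at₂)
    (list_cons.comp box.decide (list_cons.comp dia.decide (list_cons.comp ag.decide
    (list_cons.comp dag.decide (const []))))))))) htag).of_eq fun _ => rfl

theorem primrec_node {k μ tag rest : α → ℕ} {T₁ T₂ : α → List (List Bool)}
    (hk : Primrec k) (hμ : Primrec μ) (htag : Primrec tag) (hrest : Primrec rest)
    (hT₁ : Primrec T₁) (hT₂ : Primrec T₂) :
    Primrec fun a => node (k a) (μ a) (tag a) (rest a) (T₁ a) (T₂ a) := by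
  have hP : Primrec fun a => 2 ^ k a := primrec_pow.comp (const 2) hk
  have hB : Primrec fun a => 2 ^ 2 ^ k a := primrec_pow.comp (const 2) hP
  have row : Primrec₂ fun a S => (List.range (2 ^ k a)).map
      (entry (k a) (μ a) (tag a) (rest a) (T₁ a) (T₂ a) S) :=
    list_map (list_range.comp (hP.comp fst)) (primrec_entry (hk.comp (fst.comp fst))
      (hμ.comp (fst.comp fst)) (htag.comp (fst.comp fst)) (hrest.comp (fst.comp fst))
      (hT₁.comp (fst.comp fst)) (hT₂.comp (fst.comp fst)) (snd.comp fst) snd)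
  exact list_map (list_range.comp hB) row

theorem primrec_child₁ : Primrec child₁ :=
  Primrec.ite (nat_le.comp (fst.comp unpair) (const 3)) (fst.comp (unpair.comp (snd.comp unpair)))
    (snd.comp unpair)

theorem primrec_child₂ : Primrec child₂ := snd.comp (unpair.comp (snd.comp unpair))

/-- Each table is computed from the list of all tables of smaller codes. -/
theorem primrec_table : Primrec₂ fun (a : ℕ × ℕ) c => table a.1 a.2 c := by
  have hc : Primrec fun x : (ℕ × ℕ) × List (List (List Bool)) => x.2.length :=
    list_length.comp snd
  refine nat_strong_rec _ (g := fun a prev => some (node a.1 a.2 prev.length.unpair.1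
    prev.length.unpair.2 (prev.getD (child₁ prev.length) [])
      (prev.getD (child₂ prev.length) [])))
    (option_some.comp (primrec_node (fst.comp fst) (snd.comp fst) (fst.comp (unpair.comp hc))
      (snd.comp (unpair.comp hc)) ((list_getD []).comp snd (primrec_child₁.comp hc))
      ((list_getD []).comp snd (primrec_child₂.comp hc)))) fun a c => ?_
  simp only [List.length_map, List.length_range, getD_map_range]
  conv_rhs => rw [table]

theorem primrecPred_isValidCode (n : ℕ) : PrimrecPred (IsValidCode n) := by
  have hP : Primrec fun c : ℕ => 2 ^ (c + 1) := primrec_pow.comp (const 2) succ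
  have hB : Primrec fun c : ℕ => 2 ^ 2 ^ (c + 1) := primrec_pow.comp (const 2) hP
  have hM : Primrec fun c : ℕ => 2 ^ 2 ^ 2 ^ (c + 1) := primrec_pow.comp (const 2) hB
  have everywhere : PrimrecPred fun x : ℕ × ℕ => HoldsEverywhere (x.1 + 1) x.2 x.1 := by
    have holds := primrecPred_eq_true (α := ((ℕ × ℕ) × ℕ) × ℕ) (primrec_tableAt
      (primrec_table.comp (pair (succ.comp (fst.comp (fst.comp fst))) (snd.comp (fst.comp fst)))
        (fst.comp (fst.comp fst))) (snd.comp fst) snd)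
    have inCell := primrecPred_eq_true (α := ((ℕ × ℕ) × ℕ) × ℕ)
      (primrec_testBit.comp (snd.comp fst) snd)
    have inModel := primrecPred_eq_true (α := (ℕ × ℕ) × ℕ)
      (primrec_testBit.comp (snd.comp fst) snd)
    exact primrecPred_forall_lt (hB.comp fst) (inModel.imp (primrecPred_forall_lt
      (hP.comp (fst.comp fst)) (inCell.imp holds)))
  -- `Finset.card` of a filtered `Finset.range` unfolds to the length of a filtered `List.range`.
  have count : Primrec fun x : ℕ × ℕ => (cellsBelow (2 ^ 2 ^ (x.1 + 1)) x.2).card :=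
    list_length.comp ((PrimrecRel.listFilter (R := fun S μ : ℕ => μ.testBit S = true)
      (primrecPred_eq_true (primrec_testBit.comp snd fst))).comp
        (list_range.comp (hB.comp fst)) snd)
  have cells := (nat_lt.comp (const 0) (const n)).imp (nat_le.comp count (const n))
  exact primrecPred_forall_lt hM (cells.imp everywhere)

end Primrec

/-- Decidability of single-agent STIT logics: for each `n`, there is a
computable function deciding, for each formula `φ ∈ L^1` (presented via the injective
encoding `encFml`), whether `φ` is valid on all `Ldm_n^1`-models. -/
theorem single_agent_decidability (n : ℕ) :
    Function.Injective encFml ∧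
    ∃ f : ℕ → Bool, Computable f ∧ ∀ φ : Fml 1, (f (encFml φ) = true ↔ Valid n 1 φ) :=
  ⟨encFml_injective, fun c => decide (IsValidCode n c),
    (primrecPred_isValidCode n).decide.to_comp,
    fun φ => decide_eq_true_iff.trans (isValidCode_encFml_iff n φ)⟩

end Stit
end
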